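/- arXiv:2104.12504 — 5 statements merged into one kernel-verified Lean document; each statement's English description precedes it below -/
import Mathlib

section
/- Let F be a differential field of characteristic zero, I a finite index set, and for each i ∈ I let g_i ∈ F with g_i ≠ 0, 1. Suppose λ_i, μ_i, D_i ∈ F satisfy λ_i' = g_i'/g_i, μ_i' = (1-g_i)'/(1-g_i), and D_i' = -(g_i'/g_i)·μ_i. Suppose r_i ∈ F satisfies r_i = c_i·μ_i + Σ_{l∈I} c_{il}·λ_l + e_i, where c_i, c_{il}, e_i are constants with c_{il} = c_{li} for all i,l. Then for any w ∈ F, the element u := -Σ_{i∈I} c_i·D_i + (1/2)·Σ_{i,l∈I} c_{il}·λ_i·λ_l + Σ_{i∈I} e_i·λ_i + w satisfies u' = Σ_{i∈I} r_i·(g_i'/g_i) + w'. -/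
/-! Differentiate term by term: the dilogarithms contribute `Σ cᵢ μᵢ gᵢ'/gᵢ`, and because
`(c_{il})` is symmetric the quadratic form `½ Σ c_{il} λᵢ λₗ` has derivative
`Σᵢ (Σₗ c_{il} λₗ) λᵢ'`, which together with `Σ eᵢ λᵢ'` is exactly `Σ rᵢ gᵢ'/gᵢ`. -/

open Finset

namespace Derivation

variable {R A : Type*} [CommSemiring R] [CommSemiring A] [Algebra R A] (δ : Derivation R A A)
  {ι : Type*} [Fintype ι]

theorem map_const_mul {c : A} (hc : δ c = 0) (x : A) : δ (c * x) = c * δ x := by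
  simp [leibniz, hc]

theorem map_sum_const_mul {c : ι → A} (hc : ∀ i, δ (c i) = 0) (x : ι → A) :
    δ (∑ i, c i * x i) = ∑ i, c i * δ (x i) := by
  simp only [map_sum, δ.map_const_mul (hc _)]

theorem map_sum_sum_mul_mul_of_symm {q : ι → ι → A} (hq : ∀ i l, δ (q i l) = 0)
    (hsymm : ∀ i l, q i l = q l i) (x : ι → A) :
    δ (∑ i, ∑ l, q i l * x i * x l) = 2 * ∑ i, (∑ l, q i l * x l) * δ (x i) := by
  have hterm : ∀ i l,
      δ (q i l * x i * x l) = q i l * x l * δ (x i) + q i l * x i * δ (x l) := by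
    intro i l
    simp only [leibniz, hq, smul_eq_mul]
    ring
  have hswap : ∑ i, ∑ l, q i l * x i * δ (x l) = ∑ i, ∑ l, q i l * x l * δ (x i) := by
    rw [sum_comm]
    simp only [hsymm]
  simp only [map_sum, hterm, sum_add_distrib, hswap, sum_mul]
  ring

end Derivation

theorem stmt1_general {F : Type*} [Field F] [CharZero F] (δ : Derivation ℚ F F)
    {I : Type*} [Fintype I]
    (g lam mu D r c e : I → F) (cc : I → I → F) (w : F)
    (hlam : ∀ i, δ (lam i) = δ (g i) / g i)
    (hD : ∀ i, δ (D i) = -(δ (g i) / g i) * mu i)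
    (hc : ∀ i, δ (c i) = 0) (hcc : ∀ i l, δ (cc i l) = 0) (he : ∀ i, δ (e i) = 0)
    (hsym : ∀ i l, cc i l = cc l i)
    (hr : ∀ i, r i = c i * mu i + (∑ l, cc i l * lam l) + e i) :
    δ (-(∑ i, c i * D i) + (1 / 2 : F) * (∑ i, ∑ l, cc i l * lam i * lam l)
        + (∑ i, e i * lam i) + w)
      = (∑ i, r i * (δ (g i) / g i)) + δ w := by
  have hhalf : δ (1 / 2 : F) = 0 := by
    simpa using δ.map_algebraMap (1 / 2 : ℚ)
  have hdilog : -∑ i, c i * δ (D i) = ∑ i, c i * mu i * (δ (g i) / g i) := by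
    rw [← sum_neg_distrib]
    exact sum_congr rfl fun i _ => by rw [hD]; ring
  simp only [map_add, map_neg, δ.map_const_mul hhalf, δ.map_sum_const_mul hc, hdilog,
    δ.map_sum_const_mul he, δ.map_sum_sum_mul_mul_of_symm hcc hsym, hlam, hr, add_mul,
    sum_add_distrib]
  ring

/-- If each `r i = c i · μ i + Σ_l cc i l · λ l + e i` with constants `c i`,
`cc i l` (symmetric) and `e i`, where `λ i`, `μ i`, `D i` are a logarithm of
`g i`, a logarithm of `1 - g i` and a dilogarithmic integral of `g i`
respectively, then `u := -Σ c i · D i + ½ Σ cc i l · λ i · λ l + Σ e i · λ i + w`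
satisfies `u' = Σ r i · (g i)'/(g i) + w'`. -/
theorem stmt1 {F : Type*} [Field F] [CharZero F] (δ : Derivation ℚ F F)
    {I : Type*} [Fintype I]
    (g lam mu D r c e : I → F) (cc : I → I → F) (w : F)
    (hg0 : ∀ i, g i ≠ 0) (hg1 : ∀ i, g i ≠ 1)
    (hlam : ∀ i, δ (lam i) = δ (g i) / g i)
    (hmu : ∀ i, δ (mu i) = δ (1 - g i) / (1 - g i))
    (hD : ∀ i, δ (D i) = -(δ (g i) / g i) * mu i)
    (hc : ∀ i, δ (c i) = 0) (hcc : ∀ i l, δ (cc i l) = 0) (he : ∀ i, δ (e i) = 0)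
    (hsym : ∀ i l, cc i l = cc l i)
    (hr : ∀ i, r i = c i * mu i + (∑ l, cc i l * lam l) + e i) :
    δ (-(∑ i, c i * D i) + (1 / 2 : F) * (∑ i, ∑ l, cc i l * lam i * lam l)
        + (∑ i, e i * lam i) + w)
      = (∑ i, r i * (δ (g i) / g i)) + δ w :=
  stmt1_general δ g lam mu D r c e cc w hlam hD hc hcc he hsym hr
end

section
/- There is no element w algebraic over the differential field ℂ(x) (with derivation d/dx, x' = 1) such that w' = 1/x. That is, 1/x has no antiderivative in the algebraic closure of ℂ(x). -/
/-!
If `w` is algebraic over a differential field `K` of characteristic zero and `w' = a ∈ K`,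
differentiate the minimal polynomial `Xⁿ + aₙ₋₁ Xⁿ⁻¹ + ⋯` of `w`: the result has degree `< n`
and vanishes at `w`, hence is zero, and its coefficient of `Xⁿ⁻¹` gives `a = (-aₙ₋₁ / n)'`
(the trace argument: `-aₙ₋₁` is the trace of `w` over `K`). So an algebraic antiderivative
of `1/x` would already lie in `ℂ(x)`. There, writing it as `P/Q` in lowest terms,
`(P/Q)' = 1/x` says `x (P'Q - PQ') = Q²`; then `x ∣ Q`, and comparing `x`-adic orders forces
`x ∣ P`, contradicting coprimality.
-/

open Polynomial
open scoped Differential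

theorem Polynomial.X_mul_wronskian_ne_sq {F : Type*} [Field F] [CharZero F] {P Q : F[X]}
    (hQ : Q ≠ 0) (hPQ : IsCoprime P Q) : X * wronskian Q P ≠ Q ^ 2 := by
  intro h
  have hXQ : X ∣ Q := prime_X.dvd_of_dvd_pow (Dvd.intro _ h)
  obtain ⟨S, hQS, hXS⟩ := Q.exists_eq_pow_rootMultiplicity_mul_and_not_dvd hQ 0
  simp only [map_zero, sub_zero] at hQS hXS
  generalize Q.rootMultiplicity 0 = k at hQS
  subst hQS
  obtain _ | m := k
  · exact hXS (by simpa using hXQ)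
  have hcancel : X ^ (m + 1) * (X * (derivative P * S - P * derivative S - X ^ m * S ^ 2))
      = X ^ (m + 1) * ((m + 1 : F[X]) * P * S) := by
    have hdQ : derivative (X ^ (m + 1) * S)
        = (m + 1 : F[X]) * X ^ m * S + X ^ (m + 1) * derivative S := by
      rw [derivative_mul, derivative_X_pow]
      simp only [map_natCast, Nat.add_sub_cancel]
      push_cast
      ring
    rw [wronskian, hdQ] at h
    linear_combination h
  have hXmPS : X ∣ (m + 1 : F[X]) * P * S :=
    Dvd.intro _ (mul_left_cancel₀ (pow_ne_zero _ X_ne_zero) hcancel)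
  have hXm : ¬ X ∣ (m + 1 : F[X]) := by
    rw [X_dvd_iff]
    simpa using m.cast_add_one_ne_zero (R := F)
  rcases prime_X.dvd_or_dvd hXmPS with hXmP | hXS'
  · rcases prime_X.dvd_or_dvd hXmP with hXm' | hXP
    · exact hXm hXm'
    · exact not_isUnit_X (hPQ.isUnit_of_dvd' hXP hXQ)
  · exact hXS hXS'

theorem Differential.exists_deriv_eq_of_isIntegral {K L : Type*} [Field K] [CharZero K]
    [Field L] [Differential K] [Differential L] [Algebra K L] [DifferentialAlgebra K L] {w : L}
    (hw : IsIntegral K w) {a : K} (ha : w′ = algebraMap K L a) : ∃ v : K, v′ = a := by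
  set p := minpoly K w
  set n := p.natDegree
  have hn : 0 < n := minpoly.natDegree_pos hw
  have hp : p ≠ 0 := minpoly.ne_zero hw
  have hpn : p.coeff n = 1 := (minpoly.monic hw).coeff_natDegree
  -- `implicitDeriv (C a)` differentiates polynomial identities in `w`, but lowers the degree of `p`
  -- because its leading coefficient is constant.
  set q := implicitDeriv (C a) p
  have hq : aeval w q = 0 := by
    rw [← deriv_aeval_eq_implicitDeriv w (C a) (by rwa [aeval_C]), minpoly.aeval, map_zero]
  have hcoeff (i : ℕ) : q.coeff i = (p.coeff i)′ + a * (p.coeff (i + 1) * (i + 1)) := by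
    simp [q, implicitDeriv, coeff_derivative]
  have hqp : q.degree < p.degree := by
    rw [degree_eq_natDegree hp, degree_lt_iff_coeff_zero]
    intro i hi
    rw [hcoeff, coeff_eq_zero_of_natDegree_lt (by omega : n < i + 1)]
    rcases hi.lt_or_eq with hi | rfl
    · rw [coeff_eq_zero_of_natDegree_lt hi, Derivation.map_zero, zero_add, zero_mul, mul_zero]
    · rw [hpn, Derivation.map_one_eq_zero, zero_add, zero_mul, mul_zero]
  have hq0 : q = 0 := by
    by_contra hq0
    exact (minpoly.degree_le_of_ne_zero K w hq0 hq).not_gt hqp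
  refine ⟨-p.coeff (n - 1) / n, ?_⟩
  have hlast := hcoeff (n - 1)
  rw [hq0, coeff_zero, Nat.sub_add_cancel hn, hpn] at hlast
  rw [Derivation.leibniz_div_const _ _ _ (Derivation.map_natCast _ _), map_neg, smul_eq_mul]
  have hn0 : (n : K) ≠ 0 := Nat.cast_ne_zero.2 hn.ne'
  push_cast [Nat.cast_sub hn] at hlast
  rw [inv_mul_eq_iff_eq_mul₀ hn0]
  linear_combination hlast

namespace Derivation

variable {R E : Type*} [CommRing R] [Field E] [Algebra R E] (δ : Derivation R E E)

def restrictSubfield (K : Subfield E) (hK : ∀ u ∈ K, δ u ∈ K) : Derivation ℤ K K where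
  toFun u := ⟨δ u, hK u u.2⟩
  map_add' u v := Subtype.ext (δ.map_add u v)
  map_smul' n u := Subtype.ext (by simp)
  map_one_eq_zero' := Subtype.ext δ.map_one_eq_zero
  leibniz' u v := Subtype.ext (by simp [δ.leibniz])

theorem exists_mem_eq_of_isIntegral [CharZero E] {K : Subfield E} (hK : ∀ u ∈ K, δ u ∈ K)
    {w : E} (hw : IsIntegral K w) (hδw : δ w ∈ K) : ∃ v ∈ K, δ v = δ w := by
  let : Differential K := ⟨δ.restrictSubfield K hK⟩
  let : Differential E := ⟨δ.restrictScalars ℤ⟩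
  have : DifferentialAlgebra K E := ⟨fun _ => rfl⟩
  obtain ⟨v, hv⟩ := Differential.exists_deriv_eq_of_isIntegral hw (a := ⟨δ w, hδw⟩) rfl
  exact ⟨v, v.2, congrArg Subtype.val hv⟩

theorem map_mem_subfieldClosure {s : Set E} (hs : ∀ u ∈ s, δ u ∈ Subfield.closure s) {u : E}
    (hu : u ∈ Subfield.closure s) : δ u ∈ Subfield.closure s := by
  induction hu using Subfield.closure_induction with
  | mem u hu => exact hs u hu
  | one => simp
  | add u v _ _ hu hv => simpa using add_mem hu hv
  | neg u _ hu => simpa using neg_mem hu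
  | inv u hu' hu =>
    rw [leibniz_inv, smul_eq_mul]
    exact mul_mem (neg_mem (pow_mem (inv_mem hu') 2)) hu
  | mul u v hu' hv' hu hv =>
    rw [leibniz, smul_eq_mul, smul_eq_mul]
    exact add_mem (mul_mem hu' hv) (mul_mem hv' hu)

variable {F : Type*} [Field F] (c : F →+* E) (x : E)

theorem map_eval₂ (hc : ∀ a, δ (c a) = 0) (p : F[X]) :
    δ (p.eval₂ c x) = (derivative p).eval₂ c x * δ x := by
  induction p using Polynomial.induction_on' with
  | add p q hp hq => simp [hp, hq, add_mul]
  | monomial n a =>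
    simp [leibniz, leibniz_pow, hc, derivative_monomial]
    ring

theorem eval₂RingHom_injective [CharZero F] (hc : ∀ a, δ (c a) = 0) (hx : δ x ≠ 0) :
    Function.Injective (eval₂RingHom c x) := by
  refine (injective_iff_map_eq_zero _).2 fun p hp => ?_
  induction hn : p.natDegree using Nat.strong_induction_on generalizing p with
  | _ n ih =>
    have hdp : derivative p = 0 := by
      rcases eq_or_ne p.natDegree 0 with h0 | h0
      · exact derivative_of_natDegree_zero h0
      have hp' : (derivative p).eval₂ c x * δ x = 0 := by
        rw [← δ.map_eval₂ c x hc, ← coe_eval₂RingHom, hp, map_zero]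
      exact ih _ (hn ▸ natDegree_derivative_lt h0) _ ((mul_eq_zero.1 hp').resolve_right hx) rfl
    rw [eq_C_of_natDegree_eq_zero (derivative_eq_zero.1 hdp)] at hp ⊢
    simpa using hp

theorem apply_ne_inv_of_mem_closure [CharZero F] (hc : ∀ a, δ (c a) = 0) (hx : δ x = 1)
    {v : E} (hv : v ∈ Subfield.closure (Set.range c ∪ {x})) : δ v ≠ x⁻¹ := by
  have hinj := δ.eval₂RingHom_injective c x hc (hx ▸ one_ne_zero)
  let φ := RatFunc.liftRingHom (eval₂RingHom c x)
    (nonZeroDivisors_le_comap_nonZeroDivisors_of_injective _ hinj)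
  have hφ (p : F[X]) : φ (algebraMap F[X] (RatFunc F) p) = p.eval₂ c x := by
    simpa using RatFunc.liftRingHom_apply_div (eval₂RingHom c x) _ p 1
  have hclosure : Subfield.closure (Set.range c ∪ {x}) ≤ φ.fieldRange := by
    refine Subfield.closure_le.2 ?_
    rintro _ (⟨a, rfl⟩ | rfl)
    exacts [⟨algebraMap _ _ (C a), by rw [hφ, eval₂_C]⟩,
      ⟨algebraMap _ _ X, by rw [hφ, eval₂_X]⟩]
  obtain ⟨r, rfl⟩ := hclosure hv
  rw [← RatFunc.num_div_denom r, map_div₀, hφ, hφ, leibniz_div, map_eval₂ δ c x hc,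
    map_eval₂ δ c x hc, hx]
  intro h
  apply X_mul_wronskian_ne_sq (RatFunc.denom_ne_zero r) (RatFunc.isCoprime_num_denom r)
  apply hinj
  have hden : r.denom.eval₂ c x ≠ 0 := fun h0 =>
    RatFunc.denom_ne_zero r (hinj (by simpa using h0))
  have hx0 : x ≠ 0 := by rintro rfl; simp at hx
  simp only [wronskian, coe_eval₂RingHom, eval₂_mul, eval₂_sub, eval₂_pow, eval₂_X]
  simp only [smul_eq_mul, mul_one] at h
  field_simp at h
  linear_combination h

end Derivation

/-- There is no element `w` algebraic over `ℂ(x)` (inside any differential field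
extension `E` of `ℂ(x)`, with `x' = 1` and complex numbers constant) such that
`w' = 1/x`: `1/x` has no antiderivative algebraic over `ℂ(x)`. -/
theorem stmt4 {E : Type*} [Field E] [CharZero E] (δ : Derivation ℚ E E)
    (c : ℂ →+* E) (x : E) (hc : ∀ a : ℂ, δ (c a) = 0) (hx : δ x = 1) :
    ¬ ∃ w : E,
        IsAlgebraic (↥(Subfield.closure (Set.range ⇑c ∪ {x}))) w ∧ δ w = x⁻¹ := by
  rintro ⟨w, hw, hδw⟩
  set K := Subfield.closure (Set.range c ∪ {x})
  have hxK : x ∈ K := Subfield.subset_closure (Or.inr rfl)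
  have hK : ∀ u ∈ K, δ u ∈ K := fun u => δ.map_mem_subfieldClosure <| by
    rintro _ (⟨a, rfl⟩ | rfl)
    · simp [hc]
    · simp [hx]
  obtain ⟨v, hvK, hv⟩ := δ.exists_mem_eq_of_isIntegral hK hw.isIntegral (hδw ▸ inv_mem hxK)
  exact δ.apply_ne_inv_of_mem_closure c x hc hx hvK (hv.trans hδw)
end

section
/- Let F be a differential field of characteristic zero, t ≥ 1, and α₁, …, α_t distinct elements of an extension field. Let η, ξ be nonzero elements, a₁,…,a_t and b₁,…,b_t integers, and suppose f = η·∏_{j=1}^t (θ-α_j)^{a_j} and 1 - f = ξ·∏_{j=1}^t (θ-α_j)^{b_j} in a differential field F(θ) where there exist indices m ≤ n ≤ t such that: a_j > 0 and b_j = 0 for 1 ≤ j ≤ m; a_j = b_j < 0 for m+1 ≤ j ≤ n; a_j = 0 and b_j > 0 for n+1 ≤ j ≤ t. Then for any elements v₁,…,v_t of any differential field extension containing all α_j, η, ξ: Σ_{j≠k} (a_k·b_j - a_j·b_k)·((α_j' - α_k')/(α_j - α_k))·v_k = Σ_{k=1}^t (b_k·(η'/η) - a_k·(ξ'/ξ))·v_k.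 -/
/-!
Clearing denominators in `f = η P / Q` and `1 - f = ξ R / Q` gives `Q = η P + ξ R` at `θ`, hence
in `F[X]` because `θ` is transcendental. At a root `α_k` exactly one of `P`, `Q`, `R` vanishes, so
this identity becomes a two-term relation among `η`, `ξ` and the products
`∏_{j ≠ k} (α_k - α_j)^{e_j}`. Its logarithmic derivative reads
`a_k (ξ'/ξ + Σ_{j≠k} b_j ℓ_{kj}) = b_k (η'/η + Σ_{j≠k} a_j ℓ_{kj})` with `ℓ_{kj}` the logarithmic
derivative of `α_k - α_j`, which is the equality of the coefficients of `v_k`.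
-/

open Finset Polynomial Differential

/-- `(a, b)` are the exponents of `f` and of `1 - f` at a root of `P`, of `Q` or of `R`, where
`f = η P / Q` and `1 - f = ξ R / Q`. -/
def RootExponents (a b : ℤ) : Prop :=
  (0 < a ∧ b = 0) ∨ (a < 0 ∧ a = b) ∨ (a = 0 ∧ 0 < b)

lemma RootExponents.toNat_neg_eq {a b : ℤ} (h : RootExponents a b) :
    (-b).toNat = (-a).toNat := by
  rcases h with ⟨_, _⟩ | ⟨_, _⟩ | ⟨_, _⟩ <;> omega

lemma prod_zpow_mul_prod_pow {K ι : Type*} [Field K] {s : Finset ι} {y : ι → K}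
    (hy : ∀ j ∈ s, y j ≠ 0) {e : ι → ℤ} {p q : ι → ℕ} (he : ∀ j ∈ s, e j = p j - q j) :
    (∏ j ∈ s, y j ^ e j) * ∏ j ∈ s, y j ^ q j = ∏ j ∈ s, y j ^ p j := by
  rw [← prod_mul_distrib]
  refine prod_congr rfl fun j hj => ?_
  rw [he j hj, zpow_sub₀ (hy j hj), zpow_natCast, zpow_natCast,
    div_mul_cancel₀ _ (pow_ne_zero _ (hy j hj))]

namespace Differential

variable {K : Type*} [Field K] [Differential K]

lemma logDeriv_neg (a : K) : logDeriv (-a) = logDeriv a := by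
  simp only [logDeriv, map_neg, neg_div_neg_eq]

lemma logDeriv_mul_prod_pow_div_prod_pow {ι : Type*} (s : Finset ι) {c : K} (hc : c ≠ 0)
    {y : ι → K} (hy : ∀ j ∈ s, y j ≠ 0) (p q : ι → ℕ) :
    logDeriv (c * (∏ j ∈ s, y j ^ p j) / ∏ j ∈ s, y j ^ q j)
      = logDeriv c + ∑ j ∈ s, ((p j : K) - q j) * logDeriv (y j) := by
  have hprod : ∀ e : ι → ℕ, ∏ j ∈ s, y j ^ e j ≠ 0 :=
    fun e => prod_ne_zero_iff.mpr fun j hj => pow_ne_zero _ (hy j hj)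
  rw [logDeriv_div _ _ (mul_ne_zero hc (hprod p)) (hprod q), logDeriv_mul _ _ hc (hprod p),
    logDeriv_prod _ _ _ fun j hj => pow_ne_zero _ (hy j hj),
    logDeriv_prod _ _ _ fun j hj => pow_ne_zero _ (hy j hj)]
  simp only [logDeriv_pow, sub_mul, sum_sub_distrib]
  ring

/-- `p`, `q`, `r` are the values at a root `α_k` of `P`, `Q`, `R` with their factor at `α_k`
removed, and `h` is `Q = η P + ξ R` at `α_k`. -/
lemma _root_.RootExponents.mul_logDeriv_eq {a b : ℤ} (hab : RootExponents a b) {η ξ p q r : K}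
    (hq : q ≠ 0) (h : 0 ^ (-a).toNat * q = η * (0 ^ a.toNat * p) + ξ * (0 ^ b.toNat * r)) :
    a * logDeriv (ξ * r / q) = b * logDeriv (η * p / q) := by
  rcases hab with ⟨ha, rfl⟩ | ⟨ha, rfl⟩ | ⟨rfl, hb⟩
  · have ha' : a.toNat ≠ 0 := by omega
    have : ξ * r / q = 1 := by
      rw [div_eq_one_iff_eq hq]; simpa [Int.toNat_eq_zero.mpr (by omega : -a ≤ 0), ha'] using h.symm
    simp [this]
  · have ha' : (-a).toNat ≠ 0 := by omega
    have : η * p / q = -(ξ * r / q) := by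
      rw [neg_div', div_left_inj' hq]
      exact eq_neg_of_add_eq_zero_left (by simpa [Int.toNat_eq_zero.mpr ha.le, ha'] using h.symm)
    rw [this, logDeriv_neg]
  · have hb' : b.toNat ≠ 0 := by omega
    have : η * p / q = 1 := by rw [div_eq_one_iff_eq hq]; simpa [hb'] using h.symm
    simp [this]

end Differential

section Roots

variable {K ι : Type*} [Field K] [Fintype ι]

theorem sum_erase_intCast_mul_deriv_sub_div_sub [DecidableEq ι] [Differential K] {α : ι → K}
    (hα : Function.Injective α) {a b : ι → ℤ} (hab : ∀ j, RootExponents (a j) (b j))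
    {η ξ : K} (hη : η ≠ 0) (hξ : ξ ≠ 0) (k : ι)
    (hk : ∏ j, (α k - α j) ^ (-a j).toNat
      = η * ∏ j, (α k - α j) ^ (a j).toNat + ξ * ∏ j, (α k - α j) ^ (b j).toNat) :
    ∑ j ∈ univ.erase k, ((a k * b j - a j * b k : ℤ) : K) * (((α j)′ - (α k)′) / (α j - α k))
      = b k * logDeriv η - a k * logDeriv ξ := by
  have hy : ∀ j ∈ univ.erase k, α k - α j ≠ 0 := fun j hj =>
    sub_ne_zero.mpr fun h => (mem_erase.mp hj).1 (hα h.symm)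
  have hsplit : ∀ e : ι → ℕ,
      ∏ j, (α k - α j) ^ e j = 0 ^ e k * ∏ j ∈ univ.erase k, (α k - α j) ^ e j := fun e => by
    rw [← mul_prod_erase _ _ (mem_univ k), sub_self]
  rw [hsplit, hsplit, hsplit] at hk
  have key := (hab k).mul_logDeriv_eq
    (prod_ne_zero_iff.mpr fun j hj => pow_ne_zero _ (hy j hj)) hk
  rw [logDeriv_mul_prod_pow_div_prod_pow _ hξ hy, logDeriv_mul_prod_pow_div_prod_pow _ hη hy] at key
  have hcast : ∀ e : ι → ℤ, (∀ j, (-e j).toNat = (-a j).toNat) →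
      ∀ j, ((e j).toNat : K) - ((-a j).toNat : ℕ) = e j := fun e he j => by
    have h := congrArg (Int.cast : ℤ → K) (e j).toNat_sub_toNat_neg
    rwa [Int.cast_sub, Int.cast_natCast, Int.cast_natCast, he j] at h
  simp only [hcast a (fun _ => rfl), hcast b (fun j => (hab j).toNat_neg_eq)] at key
  calc ∑ j ∈ univ.erase k, ((a k * b j - a j * b k : ℤ) : K) * (((α j)′ - (α k)′) / (α j - α k))
      = a k * ∑ j ∈ univ.erase k, (b j : K) * logDeriv (α k - α j)
        - b k * ∑ j ∈ univ.erase k, (a j : K) * logDeriv (α k - α j) := by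
        rw [mul_sum, mul_sum, ← sum_sub_distrib]
        refine sum_congr rfl fun j _ => ?_
        rw [Differential.logDeriv, map_sub, ← neg_div_neg_eq, neg_sub, neg_sub]
        push_cast; ring
    _ = b k * logDeriv η - a k * logDeriv ξ := by linear_combination key

theorem prod_pow_toNat_eq_of_transcendental {F : Subfield K} {θ : K} (hθ : Transcendental F θ)
    {α : ι → K} (hαF : ∀ j, α j ∈ F) {η ξ : K} (hη : η ∈ F) (hξ : ξ ∈ F) {a b : ι → ℤ}
    (hpole : ∀ j, (-b j).toNat = (-a j).toNat)
    (hf : 1 - η * ∏ j, (θ - α j) ^ a j = ξ * ∏ j, (θ - α j) ^ b j) (x : K) :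
    ∏ j, (x - α j) ^ (-a j).toNat
      = η * ∏ j, (x - α j) ^ (a j).toNat + ξ * ∏ j, (x - α j) ^ (b j).toNat := by
  let P : (ι → ℕ) → F[X] := fun e => ∏ j, (X - C ⟨α j, hαF j⟩) ^ e j
  have hP : ∀ y e, aeval y (P e) = ∏ j, (y - α j) ^ e j := fun y e => by
    simp only [P, map_prod, map_pow, map_sub, aeval_X, aeval_C]; rfl
  have hC : ∀ y c (hc : c ∈ F), aeval y (C ⟨c, hc⟩ : F[X]) = c := fun _ _ _ => aeval_C _ _
  suffices h : P (fun j => (-a j).toNat)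
      = C ⟨η, hη⟩ * P (fun j => (a j).toNat) + C ⟨ξ, hξ⟩ * P (fun j => (b j).toNat) by
    simpa only [map_add, map_mul, hC, hP] using congrArg (aeval x) h
  refine transcendental_iff_injective.mp hθ ?_
  have hne : ∀ j ∈ univ, θ - α j ≠ 0 := fun j _ h =>
    hθ (sub_eq_zero.mp h ▸ isAlgebraic_algebraMap (⟨α j, hαF j⟩ : F))
  have hPa := prod_zpow_mul_prod_pow hne fun j _ => (a j).toNat_sub_toNat_neg.symm
  have hPb := prod_zpow_mul_prod_pow hne fun j _ => hpole j ▸ (b j).toNat_sub_toNat_neg.symm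
  simp only [map_add, map_mul, hC, hP]
  rw [← hPa, ← hPb]
  linear_combination (∏ j, (θ - α j) ^ (-a j).toNat) * hf

end Roots

theorem stmt7_general {E : Type*} [Field E] [CharZero E] (δ : Derivation ℚ E E)
    (F : Subfield E)
    (θ : E) (hθ : Transcendental (↥F) θ)
    {t : ℕ} (α : Fin t → E) (hαF : ∀ j, α j ∈ F)
    (hinj : Function.Injective α)
    (η ξ : E) (hη : η ∈ F) (hξ : ξ ∈ F) (hη0 : η ≠ 0) (hξ0 : ξ ≠ 0)
    (a b : Fin t → ℤ) (m n : ℕ)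
    (h1 : ∀ j : Fin t, (j : ℕ) < m → 0 < a j ∧ b j = 0)
    (h2 : ∀ j : Fin t, m ≤ (j : ℕ) → (j : ℕ) < n → a j < 0 ∧ a j = b j)
    (h3 : ∀ j : Fin t, n ≤ (j : ℕ) → a j = 0 ∧ 0 < b j)
    (hf : (1 : E) - η * ∏ j, (θ - α j) ^ a j = ξ * ∏ j, (θ - α j) ^ b j)
    (v : Fin t → E) :
    ∑ k, (∑ j ∈ Finset.univ.erase k,
        ((a k * b j - a j * b k : ℤ) : E) * ((δ (α j) - δ (α k)) / (α j - α k))) * v k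
      = ∑ k, ((b k : E) * (δ η / η) - (a k : E) * (δ ξ / ξ)) * v k := by
  -- makes `δ x / x` Mathlib's `Differential.logDeriv x`
  let _ : Differential E := ⟨δ.restrictScalars ℤ⟩
  have hab : ∀ j, RootExponents (a j) (b j) := fun j => by
    rcases lt_or_ge (j : ℕ) m with hjm | hjm
    · exact .inl (h1 j hjm)
    rcases lt_or_ge (j : ℕ) n with hjn | hjn
    · exact .inr (.inl (h2 j hjm hjn))
    · exact .inr (.inr (h3 j hjn))
  have hroot := prod_pow_toNat_eq_of_transcendental hθ hαF hη hξ
    (fun j => (hab j).toNat_neg_eq) hf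
  refine sum_congr rfl fun k _ => congrArg (· * v k) ?_
  exact sum_erase_intCast_mul_deriv_sub_div_sub hinj hab hη0 hξ0 k (hroot (α k))

/-- Proposition 4.1(i): with `f = η·∏(θ-α_j)^{a_j}` and
`1 - f = ξ·∏(θ-α_j)^{b_j}` (with the sign pattern coming from
`f = ηP/Q`, `1-f = ξR/Q`), for any `v₁,…,v_t`:
`Σ_{j≠k} (a_k b_j - a_j b_k)·((α_j'-α_k')/(α_j-α_k))·v_k
  = Σ_k (b_k·η'/η - a_k·ξ'/ξ)·v_k`. -/
theorem stmt7 {E : Type*} [Field E] [CharZero E] (δ : Derivation ℚ E E)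
    (F : Subfield E) (hFδ : ∀ y ∈ F, δ y ∈ F)
    (θ : E) (hθ : Transcendental (↥F) θ)
    {t : ℕ} (ht : 1 ≤ t) (α : Fin t → E) (hαF : ∀ j, α j ∈ F)
    (hinj : Function.Injective α)
    (η ξ : E) (hη : η ∈ F) (hξ : ξ ∈ F) (hη0 : η ≠ 0) (hξ0 : ξ ≠ 0)
    (a b : Fin t → ℤ) (m n : ℕ) (hmn : m ≤ n) (hnt : n ≤ t)
    (h1 : ∀ j : Fin t, (j : ℕ) < m → 0 < a j ∧ b j = 0)
    (h2 : ∀ j : Fin t, m ≤ (j : ℕ) → (j : ℕ) < n → a j < 0 ∧ a j = b j)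
    (h3 : ∀ j : Fin t, n ≤ (j : ℕ) → a j = 0 ∧ 0 < b j)
    (hf : (1 : E) - η * ∏ j, (θ - α j) ^ a j = ξ * ∏ j, (θ - α j) ^ b j)
    (v : Fin t → E) :
    ∑ k, (∑ j ∈ Finset.univ.erase k,
        ((a k * b j - a j * b k : ℤ) : E) * ((δ (α j) - δ (α k)) / (α j - α k))) * v k
      = ∑ k, ((b k : E) * (δ η / η) - (a k : E) * (δ ξ / ξ)) * v k :=
  stmt7_general δ F θ hθ α hαF hinj η ξ hη hξ hη0 hξ0 a b m n h1 h2 h3 hf v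
end

section
/- Let F be a differential field of characteristic zero and suppose v ∈ F can be written as v = Σ_{i∈I} r_i·(g_i'/g_i) + Σ_{j∈J} a_j·u_j'/λ_j + Σ_{k∈K} b_k·v_k'·E_k + w', where I, J, K are finite, r_i, w, u_j, λ_j, v_k, E_k ∈ F, g_i ∈ F \ {0,1}, λ_j' = u_j'/u_j, E_k' = (-v_k²)'·E_k, the a_j, b_k are constants, and for each i: r_i' = c_i·(1-g_i)'/(1-g_i) + Σ_{l∈I} c_{il}·(g_l'/g_l) with constants c_i, c_{il} satisfying c_{il} = c_{li}. Then there exists a differential field extension E of F with the same constants, generated over F by logarithms, dilogarithmic integrals, logarithmic integrals, and error functions of elements of F, which contains an element u with u' = v. -/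
/-!
Each of `log gᵢ`, `log (1 - gᵢ)`, `li uⱼ`, `erf vₖ` is a primitive of an element of `F`, and
`ℓ₂ gᵢ` is a primitive of `-(gᵢ'/gᵢ) log (1 - gᵢ)`. Adjoining a primitive of `s` to a
differential field `K` of characteristic zero creates no new constants: if `s` is not already a
derivative in `K`, the primitive can be taken to be the transcendental `X` of `K(X)`, whose
constants all lie in `K`. In the resulting tower

  `Σ (rᵢ log gᵢ - cᵢ (log (1 - gᵢ) log gᵢ + ℓ₂ gᵢ)) - ½ Σ c_{il} log gᵢ log g_l`
  `  + Σ aⱼ li uⱼ + Σ bₖ erf vₖ + w`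

differentiates to `v`: the formula for `rᵢ'` cancels the cross terms, and the symmetry
`c_{il} = c_{li}` is what lets it cancel those of the quadratic term.
-/

open Polynomial

noncomputable section

namespace Derivation

section Polynomial

variable {R A : Type*} [CommRing R] [CommRing A] [Algebra R A]

def polynomialExtension (δ : Derivation R A A) (s : A) : Derivation R A[X] A[X] :=
  PolynomialModule.equivPolynomialSelf.compDer δ.mapCoeffs
    + (mkDerivation A (C s)).restrictScalars R

variable (δ : Derivation R A A) (s : A)

lemma coeff_polynomialExtension (p : A[X]) (i : ℕ) :
    (δ.polynomialExtension s p).coeff i = δ (p.coeff i) + p.coeff (i + 1) * (i + 1) * s := by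
  rw [polynomialExtension, add_apply, coeff_add]
  congr 1
  rw [restrictScalars_apply, mkDerivation_apply, smul_eq_mul, coeff_mul_C, coeff_derivative]

@[simp] lemma polynomialExtension_C (a : A) : δ.polynomialExtension s (C a) = C (δ a) := by
  ext i
  rcases i with _ | i <;> simp [coeff_polynomialExtension, coeff_C]

@[simp] lemma polynomialExtension_X : δ.polynomialExtension s X = C s := by
  ext i
  rcases i with _ | _ | i <;> simp [coeff_polynomialExtension, coeff_X, coeff_C]

lemma degree_polynomialExtension_lt [Nontrivial A] {q : A[X]} (hq : q.Monic) :
    (δ.polynomialExtension s q).degree < q.degree := by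
  rw [degree_eq_natDegree hq.ne_zero, degree_lt_iff_coeff_zero]
  intro m hm
  have hm' : q.natDegree ≤ m := by exact_mod_cast hm
  rw [coeff_polynomialExtension, coeff_eq_zero_of_natDegree_lt (by omega : q.natDegree < m + 1)]
  rcases hm'.eq_or_lt with rfl | hlt
  · simp [hq.coeff_natDegree]
  · simp [coeff_eq_zero_of_natDegree_lt hlt]

end Polynomial

section PolynomialField

variable {R K : Type*} [CommRing R] [Field K] [CharZero K] [Algebra R K] (δ : Derivation R K K)
  {s : K}

/-- If `s` has no antiderivative, the leading two coefficients of a nonconstant `p` forbid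
`p' = 0`: from `δ lₙ = 0` and `δ lₙ₋₁ + n lₙ s = 0` one would get `(-lₙ₋₁ / (n lₙ))' = s`. -/
lemma natDegree_eq_zero_of_polynomialExtension_eq_zero (hs : ∀ f, δ f ≠ s) {p : K[X]} (hp : p ≠ 0)
    (h : δ.polynomialExtension s p = 0) : p.natDegree = 0 := by
  by_contra hd
  obtain ⟨n, hn⟩ := Nat.exists_eq_add_one.mpr (Nat.pos_of_ne_zero hd)
  have hcoeff : ∀ i, δ (p.coeff i) + p.coeff (i + 1) * (i + 1) * s = 0 := fun i => by
    rw [← coeff_polynomialExtension, h, coeff_zero]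
  have hlead := hcoeff p.natDegree
  rw [coeff_natDegree_succ_eq_zero, zero_mul, zero_mul, add_zero] at hlead
  have hnext := hcoeff n
  rw [← hn, ← Nat.cast_add_one, ← hn] at hnext
  rw [coeff_natDegree] at hlead hnext
  have hl : p.leadingCoeff ≠ 0 := leadingCoeff_ne_zero.mpr hp
  have hn0 : (p.natDegree : K) ≠ 0 := Nat.cast_ne_zero.mpr hd
  have hδl : δ (p.leadingCoeff * p.natDegree) = 0 := by
    rw [leibniz, map_natCast, hlead, smul_zero, smul_zero, add_zero]
  apply hs (-p.coeff n / (p.leadingCoeff * p.natDegree))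
  rw [leibniz_div_const _ _ _ hδl, map_neg, eq_neg_of_add_eq_zero_left hnext, smul_eq_mul]
  field_simp

lemma exists_eq_C_of_polynomialExtension_eq_zero (hs : ∀ f, δ f ≠ s) {p : K[X]}
    (h : δ.polynomialExtension s p = 0) : ∃ x, δ x = 0 ∧ p = C x := by
  rcases eq_or_ne p 0 with rfl | hp
  · exact ⟨0, map_zero δ, C_0.symm⟩
  have hC := eq_C_of_natDegree_eq_zero (natDegree_eq_zero_of_polynomialExtension_eq_zero δ hs hp h)
  rw [hC, polynomialExtension_C, C_eq_zero] at h
  exact ⟨_, h, hC⟩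

end PolynomialField

section FractionRing

variable {R A : Type*} (K : Type*) [CommRing R] [CommRing A] [IsDomain A] [Algebra R A]
  [Field K] [Algebra A K] [IsFractionRing A K] (d : Derivation R A A)

local notation "φ" => algebraMap A K

def quotientRule (a b : A) : K := (φ (d a) * φ b - φ a * φ (d b)) / φ b ^ 2

variable {K} in
lemma quotientRule_eq_of_mul_eq {a b a' b' : A} (hb : b ≠ 0) (hb' : b' ≠ 0)
    (h : a * b' = a' * b) : quotientRule K d a b = quotientRule K d a' b' := by
  have hB : φ b ≠ 0 := IsFractionRing.to_map_ne_zero_of_mem_nonZeroDivisors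
    (mem_nonZeroDivisors_of_ne_zero hb)
  have hB' : φ b' ≠ 0 := IsFractionRing.to_map_ne_zero_of_mem_nonZeroDivisors
    (mem_nonZeroDivisors_of_ne_zero hb')
  have h₀ : φ a * φ b' = φ a' * φ b := by rw [← map_mul, ← map_mul, h]
  have h₁ : φ (d a) * φ b' + φ a * φ (d b') = φ (d a') * φ b + φ a' * φ (d b) := by
    simpa only [leibniz, smul_eq_mul, map_add, map_mul, add_comm, mul_comm] using
      congrArg (fun x => φ (d x)) h
  rw [quotientRule, quotientRule, div_eq_div_iff (pow_ne_zero 2 hB) (pow_ne_zero 2 hB')]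
  linear_combination (φ b * φ b') * h₁ - (φ (d b) * φ b' + φ (d b') * φ b) * h₀

def extendFractionRingFun (x : K) : K :=
  quotientRule K d (IsLocalization.sec (nonZeroDivisors A) x).1
    (IsLocalization.sec (nonZeroDivisors A) x).2

lemma extendFractionRingFun_div (a b : A) (hb : b ≠ 0) :
    extendFractionRingFun K d (φ a / φ b) = quotientRule K d a b := by
  have hspec := IsLocalization.sec_spec (nonZeroDivisors A) (φ a / φ b)
  rw [extendFractionRingFun]
  generalize IsLocalization.sec (nonZeroDivisors A) (φ a / φ b) = p at hspec ⊢
  have hp : p.2.1 ≠ 0 := nonZeroDivisors.coe_ne_zero p.2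
  have hB : φ b ≠ 0 := IsFractionRing.to_map_ne_zero_of_mem_nonZeroDivisors
    (mem_nonZeroDivisors_of_ne_zero hb)
  refine quotientRule_eq_of_mul_eq d hp hb (IsFractionRing.injective A K ?_)
  rw [map_mul, map_mul, ← hspec]
  field_simp

lemma extendFractionRingFun_algebraMap (a : A) :
    extendFractionRingFun K d (φ a) = φ (d a) := by
  simpa [quotientRule] using extendFractionRingFun_div K d a 1 one_ne_zero

lemma extendFractionRingFun_add (x y : K) :
    extendFractionRingFun K d (x + y)
      = extendFractionRingFun K d x + extendFractionRingFun K d y := by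
  obtain ⟨a, b, hb, rfl⟩ := IsFractionRing.div_surjective A x
  obtain ⟨a', b', hb', rfl⟩ := IsFractionRing.div_surjective A y
  have hB := IsFractionRing.to_map_ne_zero_of_mem_nonZeroDivisors (K := K) hb
  have hB' := IsFractionRing.to_map_ne_zero_of_mem_nonZeroDivisors (K := K) hb'
  rw [div_add_div _ _ hB hB', ← map_mul, ← map_mul, ← map_mul, ← map_add,
    extendFractionRingFun_div K d _ _ (mul_ne_zero (nonZeroDivisors.ne_zero hb)
      (nonZeroDivisors.ne_zero hb')),
    extendFractionRingFun_div K d _ _ (nonZeroDivisors.ne_zero hb),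
    extendFractionRingFun_div K d _ _ (nonZeroDivisors.ne_zero hb')]
  simp only [quotientRule, leibniz, smul_eq_mul, map_add, map_mul]
  field_simp
  ring

lemma extendFractionRingFun_mul (x y : K) :
    extendFractionRingFun K d (x * y)
      = x * extendFractionRingFun K d y + y * extendFractionRingFun K d x := by
  obtain ⟨a, b, hb, rfl⟩ := IsFractionRing.div_surjective A x
  obtain ⟨a', b', hb', rfl⟩ := IsFractionRing.div_surjective A y
  have hB := IsFractionRing.to_map_ne_zero_of_mem_nonZeroDivisors (K := K) hb
  have hB' := IsFractionRing.to_map_ne_zero_of_mem_nonZeroDivisors (K := K) hb'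
  rw [div_mul_div_comm, ← map_mul, ← map_mul,
    extendFractionRingFun_div K d _ _ (mul_ne_zero (nonZeroDivisors.ne_zero hb)
      (nonZeroDivisors.ne_zero hb')),
    extendFractionRingFun_div K d _ _ (nonZeroDivisors.ne_zero hb),
    extendFractionRingFun_div K d _ _ (nonZeroDivisors.ne_zero hb')]
  simp only [quotientRule, leibniz, smul_eq_mul, map_add, map_mul]
  field_simp
  ring

variable [Algebra R K] [IsScalarTower R A K]

def extendFractionRing : Derivation R K K :=
  Derivation.mk'
    { toFun := extendFractionRingFun K d
      map_add' := extendFractionRingFun_add K d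
      map_smul' := fun r x => by
        rw [RingHom.id_apply, Algebra.smul_def, Algebra.smul_def,
          IsScalarTower.algebraMap_apply R A K, extendFractionRingFun_mul,
          extendFractionRingFun_algebraMap, map_algebraMap, map_zero, mul_zero, add_zero] }
    (fun x y => extendFractionRingFun_mul K d x y)

@[simp] lemma extendFractionRing_algebraMap (a : A) :
    d.extendFractionRing K (φ a) = φ (d a) :=
  extendFractionRingFun_algebraMap K d a

@[simp] lemma extendFractionRing_div (a b : A) (hb : b ≠ 0) :
    d.extendFractionRing K (φ a / φ b) = (φ (d a) * φ b - φ a * φ (d b)) / φ b ^ 2 :=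
  extendFractionRingFun_div K d a b hb

end FractionRing

section RatFunc

variable {K : Type*} [Field K] [CharZero K] (δ : Derivation ℚ K K) {s : K}

lemma extendFractionRing_polynomialExtension_algebraMap (x : K) :
    (δ.polynomialExtension s).extendFractionRing (RatFunc K) (algebraMap K (RatFunc K) x)
      = algebraMap K (RatFunc K) (δ x) := by
  simp only [IsScalarTower.algebraMap_apply K K[X] (RatFunc K), algebraMap_eq,
    extendFractionRing_algebraMap, polynomialExtension_C]

lemma extendFractionRing_polynomialExtension_X :
    (δ.polynomialExtension s).extendFractionRing (RatFunc K) RatFunc.X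
      = algebraMap K (RatFunc K) s := by
  rw [← RatFunc.algebraMap_X, extendFractionRing_algebraMap, polynomialExtension_X,
    IsScalarTower.algebraMap_apply K K[X] (RatFunc K), algebraMap_eq]

/-- Write `y = p / q` in lowest terms with `q` monic. Then `p' q = p q'`, so `q ∣ q'`, which
forces `q' = 0` as `deg q' < deg q`; hence `q = 1`, and `p' = 0` makes `p` a constant. -/
theorem exists_algebraMap_eq_of_extendFractionRing_polynomialExtension_eq_zero
    (hs : ∀ f, δ f ≠ s) {y : RatFunc K}
    (hy : (δ.polynomialExtension s).extendFractionRing (RatFunc K) y = 0) :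
    ∃ x, δ x = 0 ∧ algebraMap K (RatFunc K) x = y := by
  set d := δ.polynomialExtension s
  rw [← y.num_div_denom, extendFractionRing_div _ _ _ _ y.denom_ne_zero, div_eq_zero_iff,
    sub_eq_zero, ← map_mul, ← map_mul] at hy
  have hcross : d y.num * y.denom = y.num * d y.denom := by
    refine hy.elim (fun h => IsFractionRing.injective K[X] (RatFunc K) h) fun h => ?_
    exact absurd h (pow_ne_zero 2 ((map_ne_zero_iff _ (IsFractionRing.injective _ _)).mpr
      y.denom_ne_zero))
  have hdvd : y.denom ∣ d y.denom :=
    y.isCoprime_num_denom.symm.dvd_of_dvd_mul_left ⟨d y.num, by rw [← hcross, mul_comm]⟩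
  have hdenom' : d y.denom = 0 :=
    eq_zero_of_dvd_of_degree_lt hdvd (degree_polynomialExtension_lt δ s y.monic_denom)
  have hdenom : y.denom = 1 := by
    obtain ⟨c, -, hc⟩ := exists_eq_C_of_polynomialExtension_eq_zero δ hs hdenom'
    exact eq_one_of_monic_natDegree_zero y.monic_denom (by rw [hc, natDegree_C])
  rw [hdenom', mul_zero, hdenom, mul_one] at hcross
  obtain ⟨x, hx, hnum⟩ := exists_eq_C_of_polynomialExtension_eq_zero δ hs hcross
  refine ⟨x, hx, ?_⟩
  rw [← y.num_div_denom, hnum, hdenom, map_one, div_one,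
    IsScalarTower.algebraMap_apply K K[X] (RatFunc K), algebraMap_eq]

end RatFunc

section Dilogarithm

variable {E : Type*} [CommRing E] [Algebra ℚ E] (δ : Derivation ℚ E E) {ι : Type*} [Fintype ι]

lemma apply_sum_mul_of_apply_eq_zero (c x : ι → E) (hc : ∀ i, δ (c i) = 0) :
    δ (∑ i, c i * x i) = ∑ i, c i * δ (x i) := by
  simp [leibniz, hc]

lemma apply_sum_sum_mul_of_symm (cc : ι → ι → E) (L : ι → E) (hcc : ∀ i l, δ (cc i l) = 0)
    (hsym : ∀ i l, cc i l = cc l i) :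
    δ (∑ i, ∑ l, cc i l * L i * L l) = 2 * ∑ i, L i * ∑ l, cc i l * δ (L l) := by
  have hdirect : ∑ i, ∑ l, cc i l * L i * δ (L l) = ∑ i, L i * ∑ l, cc i l * δ (L l) := by
    refine Finset.sum_congr rfl fun i _ => ?_
    rw [Finset.mul_sum]
    exact Finset.sum_congr rfl fun l _ => by ring
  have hswap : ∑ i, ∑ l, L l * (cc i l * δ (L i)) = ∑ i, L i * ∑ l, cc i l * δ (L l) := by
    rw [Finset.sum_comm]
    refine Finset.sum_congr rfl fun i _ => ?_
    rw [Finset.mul_sum]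
    exact Finset.sum_congr rfl fun l _ => by rw [hsym]
  simp only [map_sum, leibniz, smul_eq_mul, hcc, mul_zero, add_zero, Finset.sum_add_distrib]
  rw [hdirect, hswap, two_mul]

/-- With `L, M, D` standing for `log g, log (1 - g), ℓ₂ g`, this is the paper's
`-Σ cᵢ ℓ₂ gᵢ + ½ Σ c_{il} log gᵢ log g_l + Σ eᵢ log gᵢ` after substituting
`eᵢ = rᵢ - cᵢ log (1 - gᵢ) - Σ_l c_{il} log g_l`. -/
def dilogCombination (r c L M D : ι → E) (cc : ι → ι → E) : E :=
  ∑ i, (r i * L i - c i * (M i * L i + D i)) - (2⁻¹ : ℚ) • ∑ i, ∑ l, cc i l * L i * L l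

theorem apply_dilogCombination {r c L M D : ι → E} {cc : ι → ι → E}
    (hc : ∀ i, δ (c i) = 0) (hcc : ∀ i l, δ (cc i l) = 0) (hsym : ∀ i l, cc i l = cc l i)
    (hr : ∀ i, δ (r i) = c i * δ (M i) + ∑ l, cc i l * δ (L l))
    (hD : ∀ i, δ (D i) = -(δ (L i) * M i)) :
    δ (dilogCombination r c L M D cc) = ∑ i, r i * δ (L i) := by
  have hhalf (x : E) : (2⁻¹ : ℚ) • (2 * x) = x := by
    rw [two_mul, ← two_smul ℚ x, smul_smul]
    norm_num
  rw [dilogCombination, map_sub, δ.map_smul, apply_sum_sum_mul_of_symm δ cc L hcc hsym, hhalf,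
    map_sum, ← Finset.sum_sub_distrib]
  refine Finset.sum_congr rfl fun i _ => ?_
  simp only [map_sub, map_add, leibniz, smul_eq_mul, hc, hD, hr]
  ring

end Dilogarithm

end Derivation

structure NoNewConstantsExtension {R K E : Type*} [CommRing R] [CommRing K] [CommRing E]
    [Algebra R K] [Algebra R E] (δ : Derivation R K K) (δE : Derivation R E E) (j : K →+* E) :
    Prop where
  deriv_map : ∀ x, δE (j x) = j (δ x)
  exists_eq_of_deriv_eq_zero : ∀ y, δE y = 0 → ∃ x, δ x = 0 ∧ j x = y

namespace NoNewConstantsExtension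

variable {R K E₁ E₂ : Type*} [CommRing R] [CommRing K] [CommRing E₁] [CommRing E₂]
  [Algebra R K] [Algebra R E₁] [Algebra R E₂]

lemma refl (δ : Derivation R K K) : NoNewConstantsExtension δ δ (RingHom.id K) :=
  ⟨fun _ => rfl, fun y hy => ⟨y, hy, rfl⟩⟩

lemma comp {δ : Derivation R K K} {δ₁ : Derivation R E₁ E₁} {δ₂ : Derivation R E₂ E₂}
    {j₁ : K →+* E₁} {j₂ : E₁ →+* E₂} (h₂ : NoNewConstantsExtension δ₁ δ₂ j₂)
    (h₁ : NoNewConstantsExtension δ δ₁ j₁) : NoNewConstantsExtension δ δ₂ (j₂.comp j₁) where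
  deriv_map x := by rw [RingHom.comp_apply, h₂.deriv_map, h₁.deriv_map, RingHom.comp_apply]
  exists_eq_of_deriv_eq_zero y hy := by
    obtain ⟨y₁, hy₁, rfl⟩ := h₂.exists_eq_of_deriv_eq_zero y hy
    obtain ⟨x, hx, rfl⟩ := h₁.exists_eq_of_deriv_eq_zero y₁ hy₁
    exact ⟨x, hx, rfl⟩

end NoNewConstantsExtension

lemma Subfield.closure_image_union_eq_top {K E : Type*} [Field K] [Field E] (j : K →+* E)
    {S : Set K} {T : Set E} (hS : closure S = ⊤) (hT : closure (Set.range j ∪ T) = ⊤) :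
    closure (j '' S ∪ T) = ⊤ := by
  have hrange : Set.range j ⊆ closure (j '' S ∪ T) := by
    rintro _ ⟨x, rfl⟩
    have hx : j x ∈ (closure S).map j := ⟨x, hS ▸ mem_top x, rfl⟩
    rw [j.map_field_closure] at hx
    exact closure_mono Set.subset_union_left hx
  rw [eq_top_iff, ← hT]
  exact closure_le.mpr (Set.union_subset hrange (subset_closure.trans' Set.subset_union_right))

theorem exists_primitive_extension {K : Type u} [Field K] [CharZero K] (δ : Derivation ℚ K K)
    (s : K) :
    ∃ (E : Type u) (_ : Field E) (_ : CharZero E) (δE : Derivation ℚ E E) (j : K →+* E) (t : E),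
      NoNewConstantsExtension δ δE j ∧ δE t = j s ∧ Subfield.closure (Set.range j ∪ {t}) = ⊤ := by
  by_cases hs : ∃ f, δ f = s
  · obtain ⟨f, rfl⟩ := hs
    exact ⟨K, _, _, δ, RingHom.id K, f, .refl δ, rfl,
      eq_top_iff.mpr fun y _ => Subfield.subset_closure (Or.inl ⟨y, rfl⟩)⟩
  push Not at hs
  exact ⟨RatFunc K, _, _, (δ.polynomialExtension s).extendFractionRing (RatFunc K),
    algebraMap K (RatFunc K), RatFunc.X,
    ⟨δ.extendFractionRing_polynomialExtension_algebraMap,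
      fun _ => δ.exists_algebraMap_eq_of_extendFractionRing_polynomialExtension_eq_zero hs⟩,
    δ.extendFractionRing_polynomialExtension_X,
    congrArg IntermediateField.toSubfield RatFunc.adjoin_X⟩

theorem exists_primitives_extension {ι : Type*} [Finite ι] {K : Type u} [Field K] [CharZero K]
    (δ : Derivation ℚ K K) (s : ι → K) :
    ∃ (E : Type u) (_ : Field E) (_ : CharZero E) (δE : Derivation ℚ E E) (j : K →+* E)
      (t : ι → E), NoNewConstantsExtension δ δE j ∧ (∀ m, δE (t m) = j (s m)) ∧
        Subfield.closure (Set.range j ∪ Set.range t) = ⊤ := by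
  induction ι using Finite.induction_empty_option generalizing K with
  | of_equiv e ih =>
    obtain ⟨E, _, _, δE, j, t, hj, ht, hcl⟩ := ih δ (s ∘ e)
    refine ⟨E, _, _, δE, j, t ∘ e.symm, hj, fun m => by simpa using ht (e.symm m), ?_⟩
    rwa [e.symm.surjective.range_comp]
  | h_empty =>
    refine ⟨K, _, _, δ, RingHom.id K, PEmpty.elim, .refl δ, nofun, ?_⟩
    exact eq_top_iff.mpr fun y _ => Subfield.subset_closure (Or.inl ⟨y, rfl⟩)
  | h_option ih =>
    obtain ⟨E₁, _, _, δ₁, j₁, t₀, h₁, ht₀, hcl₁⟩ := exists_primitive_extension δ (s none)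
    obtain ⟨E₂, _, _, δ₂, j₂, t, h₂, ht, hcl₂⟩ := ih δ₁ (fun m => j₁ (s (some m)))
    refine ⟨E₂, _, _, δ₂, j₂.comp j₁, fun o => o.elim (j₂ t₀) t, h₂.comp h₁, ?_, ?_⟩
    · rintro (_ | m)
      · exact (h₂.deriv_map t₀).trans (congrArg j₂ ht₀)
      · exact ht m
    · rw [Option.range_elim, RingHom.coe_comp, Set.range_comp, Set.insert_eq,
        ← Set.union_assoc, ← Set.image_singleton, ← Set.image_union]
      exact Subfield.closure_image_union_eq_top j₂ hcl₁ hcl₂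

lemma exists_fin_closure_union_range_eq_top {E P : Type*} [DivisionRing E] [Finite P] {S : Set E}
    {θ : P → E} (p : E → Prop) (hcl : Subfield.closure (S ∪ Set.range θ) = ⊤)
    (hθ : ∀ m, p (θ m)) :
    ∃ (n : ℕ) (θ' : Fin n → E), Subfield.closure (S ∪ Set.range θ') = ⊤ ∧ ∀ i, p (θ' i) := by
  obtain ⟨n, ⟨e⟩⟩ := Finite.exists_equiv_fin P
  exact ⟨n, θ ∘ e.symm, by rwa [e.symm.surjective.range_comp], fun _ => hθ _⟩

/-- `θ` is a logarithm, a dilogarithmic integral, a logarithmic integral or an error function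
of elements of `F`. -/
def IsDELGenerator {F E : Type*} [Field F] [CharZero F] [Field E] [CharZero E]
    (δF : Derivation ℚ F F) (δE : Derivation ℚ E E) (ι : F →+* E) (θ : E) : Prop :=
  (∃ h : F, h ≠ 0 ∧ δE θ = ι (δF h) / ι h) ∨
  (∃ g₀ : F, g₀ ≠ 0 ∧ g₀ ≠ 1 ∧ ∃ η : E,
    δE η = -(δE (1 - ι g₀) / (1 - ι g₀)) ∧ δE θ = (ι (δF g₀) / ι g₀) * η) ∨
  (∃ p q : F, δF q = δF p / p ∧ δE θ = ι (δF p) / ι q) ∨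
  (∃ p q : F, δF q = δF (-(p ^ 2)) * q ∧ δE θ = ι (δF p) * ι q)

theorem exists_extension_log_dilog_li_erf {F : Type u} [Field F] [CharZero F]
    (δF : Derivation ℚ F F)
    {I J K : Type*} [Finite I] [Finite J] [Finite K] (g : I → F) (hg : ∀ i, g i ≠ 0 ∧ g i ≠ 1)
    (u lam : J → F) (hlam : ∀ j, δF (lam j) = δF (u j) / u j)
    (vk Ek : K → F) (hEk : ∀ k, δF (Ek k) = δF (-(vk k ^ 2)) * Ek k) :
    ∃ (E : Type u) (_ : Field E) (_ : CharZero E) (δE : Derivation ℚ E E) (ι : F →+* E)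
      (L M D : I → E) (Li : J → E) (Erf : K → E),
      NoNewConstantsExtension δF δE ι ∧
      (∃ (n : ℕ) (θ : Fin n → E), Subfield.closure (Set.range ι ∪ Set.range θ) = ⊤ ∧
        ∀ i, IsDELGenerator δF δE ι (θ i)) ∧
      (∀ i, δE (L i) = ι (δF (g i) / g i)) ∧ (∀ i, δE (M i) = ι (δF (1 - g i) / (1 - g i))) ∧
      (∀ i, δE (D i) = -(δE (L i) * M i)) ∧ (∀ j, δE (Li j) = ι (δF (u j) / lam j)) ∧
      (∀ k, δE (Erf k) = ι (δF (vk k) * Ek k)) := by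
  obtain ⟨E₁, _, _, δ₁, j₁, t₁, h₁, ht₁, hcl₁⟩ := exists_primitives_extension δF
    (Sum.elim (fun i => δF (g i) / g i) (Sum.elim (fun i => δF (1 - g i) / (1 - g i))
      (Sum.elim (fun j => δF (u j) / lam j) (fun k => δF (vk k) * Ek k))))
  obtain ⟨E₂, _, _, δ₂, j₂, t₂, h₂, ht₂, hcl₂⟩ := exists_primitives_extension δ₁
    (fun i => -(j₁ (δF (g i) / g i) * t₁ (.inr (.inl i))))
  have ht m := (h₂.deriv_map (t₁ m)).trans (congrArg j₂ (ht₁ m))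
  set ι := j₂.comp j₁
  have hL i : δ₂ (j₂ (t₁ (.inl i))) = ι (δF (g i) / g i) := ht (.inl i)
  have hM i : δ₂ (j₂ (t₁ (.inr (.inl i)))) = ι (δF (1 - g i) / (1 - g i)) := ht (.inr (.inl i))
  have hLi j : δ₂ (j₂ (t₁ (.inr (.inr (.inl j))))) = ι (δF (u j) / lam j) := ht _
  have hErf k : δ₂ (j₂ (t₁ (.inr (.inr (.inr k))))) = ι (δF (vk k) * Ek k) := ht _
  have hD i : δ₂ (t₂ i) = -(δ₂ (j₂ (t₁ (.inl i))) * j₂ (t₁ (.inr (.inl i)))) := by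
    rw [ht₂, hL, map_neg, map_mul]
    rfl
  refine ⟨E₂, _, _, δ₂, ι, fun i => j₂ (t₁ (.inl i)), fun i => j₂ (t₁ (.inr (.inl i))), t₂,
    fun j => j₂ (t₁ (.inr (.inr (.inl j)))), fun k => j₂ (t₁ (.inr (.inr (.inr k)))), h₂.comp h₁,
    exists_fin_closure_union_range_eq_top (θ := Sum.elim (j₂ ∘ t₁) t₂) _ ?_ ?_,
    hL, hM, hD, hLi, hErf⟩
  · rw [Set.Sum.elim_range, Set.range_comp, RingHom.coe_comp, Set.range_comp, ← Set.union_assoc,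
      ← Set.image_union]
    exact Subfield.closure_image_union_eq_top j₂ hcl₁ hcl₂
  · rintro ((i | i | j | k) | i)
    · exact .inl ⟨g i, (hg i).1, by rw [Sum.elim_inl, Function.comp_apply, hL, map_div₀]⟩
    · exact .inl ⟨1 - g i, sub_ne_zero.mpr (hg i).2.symm,
        by rw [Sum.elim_inl, Function.comp_apply, hM, map_div₀]⟩
    · exact .inr (.inr (.inl ⟨u j, lam j, hlam j,
        by rw [Sum.elim_inl, Function.comp_apply, hLi, map_div₀]⟩))
    · exact .inr (.inr (.inr ⟨vk k, Ek k, hEk k,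
        by rw [Sum.elim_inl, Function.comp_apply, hErf, map_mul]⟩))
    · refine .inr (.inl ⟨g i, (hg i).1, (hg i).2, -j₂ (t₁ (.inr (.inl i))), ?_, ?_⟩)
      · rw [map_neg, hM, ← map_one ι, ← map_sub, (h₂.comp h₁).deriv_map, map_div₀]
      · rw [Sum.elim_inr, hD, hL, map_div₀, mul_neg]

end

theorem stmt11_general {F : Type u} [Field F] [CharZero F] (δF : Derivation ℚ F F)
    {I J K : Type} [Fintype I] [Fintype J] [Fintype K]
    (v w : F) (r g : I → F) (a u lam : J → F) (b vk Ek : K → F)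
    (c : I → F) (cc : I → I → F)
    (hg : ∀ i, g i ≠ 0 ∧ g i ≠ 1)
    (ha : ∀ j, δF (a j) = 0)
    (hlam : ∀ j, δF (lam j) = δF (u j) / u j)
    (hb : ∀ k, δF (b k) = 0)
    (hEk : ∀ k, δF (Ek k) = δF (-(vk k ^ 2)) * Ek k)
    (hc : ∀ i, δF (c i) = 0) (hcc : ∀ i l, δF (cc i l) = 0)
    (hsym : ∀ i l, cc i l = cc l i)
    (hr : ∀ i, δF (r i)
        = c i * (δF (1 - g i) / (1 - g i)) + ∑ l, cc i l * (δF (g l) / g l))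
    (hv : v = (∑ i, r i * (δF (g i) / g i)) + (∑ j, a j * (δF (u j) / lam j))
        + (∑ k, b k * δF (vk k) * Ek k) + δF w) :
    ∃ (E : Type u) (_ : Field E) (_ : CharZero E) (δE : Derivation ℚ E E)
      (ι : F →+* E),
      (∀ x : F, δE (ι x) = ι (δF x)) ∧
      (∀ y : E, δE y = 0 → ∃ x : F, δF x = 0 ∧ ι x = y) ∧
      (∃ (n : ℕ) (θ : Fin n → E),
        Subfield.closure (Set.range ⇑ι ∪ Set.range θ) = ⊤ ∧
        ∀ i : Fin n,
          (∃ h : F, h ≠ 0 ∧ δE (θ i) = ι (δF h) / ι h) ∨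
          (∃ g₀ : F, g₀ ≠ 0 ∧ g₀ ≠ 1 ∧ ∃ η : E,
            δE η = -(δE (1 - ι g₀) / (1 - ι g₀)) ∧
            δE (θ i) = (ι (δF g₀) / ι g₀) * η) ∨
          (∃ p q : F, δF q = δF p / p ∧ δE (θ i) = ι (δF p) / ι q) ∨
          (∃ p q : F, δF q = δF (-(p ^ 2)) * q ∧ δE (θ i) = ι (δF p) * ι q)) ∧
      (∃ z : E, δE z = ι v) := by
  obtain ⟨E, _, _, δE, ι, L, M, D, Li, Erf, hι, hgen, hL, hM, hD, hLi, hErf⟩ :=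
    exists_extension_log_dilog_li_erf δF g hg u lam hlam vk Ek hEk
  have hconst {x : F} (hx : δF x = 0) : δE (ι x) = 0 := by rw [hι.deriv_map, hx, map_zero]
  have hdilog := δE.apply_dilogCombination (r := fun i => ι (r i)) (c := fun i => ι (c i))
    (cc := fun i l => ι (cc i l)) (fun i => hconst (hc i)) (fun i l => hconst (hcc i l))
    (fun i l => by rw [hsym]) (fun i => by simp [hι.deriv_map, hr, hM, hL]) hD
  refine ⟨E, _, _, δE, ι, hι.deriv_map, hι.exists_eq_of_deriv_eq_zero, hgen,
    Derivation.dilogCombination (fun i => ι (r i)) (fun i => ι (c i)) L M D (fun i l => ι (cc i l))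
      + ∑ j, ι (a j) * Li j + ∑ k, ι (b k) * Erf k + ι w, ?_⟩
  rw [map_add, map_add, map_add, hdilog,
    δE.apply_sum_mul_of_apply_eq_zero _ _ fun j => hconst (ha j),
    δE.apply_sum_mul_of_apply_eq_zero _ _ fun k => hconst (hb k), hι.deriv_map, hv]
  simp only [hL, hLi, hErf, map_add, map_sum, map_mul, mul_assoc]

/-- If `v ∈ F` admits a 𝒟ℰℒ-expression
`v = Σ rᵢ·gᵢ'/gᵢ + Σ aⱼ·uⱼ'/log uⱼ + Σ bₖ·vₖ'·e^{-vₖ²} + w'` with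
`rᵢ' = cᵢ·(1-gᵢ)'/(1-gᵢ) + Σ_l c_{il}·g_l'/g_l`, constants `c_{il} = c_{li}`,
then some differential field extension `E` of `F` with the same constants,
generated over `F` by logarithms, dilogarithmic integrals, logarithmic
integrals and error functions of elements of `F`, contains an antiderivative
of `v`. -/
theorem stmt11 {F : Type u} [Field F] [CharZero F] (δF : Derivation ℚ F F)
    {I J K : Type} [Fintype I] [Fintype J] [Fintype K]
    (v w : F) (r g : I → F) (a u lam : J → F) (b vk Ek : K → F)
    (c : I → F) (cc : I → I → F)
    (hg : ∀ i, g i ≠ 0 ∧ g i ≠ 1)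
    (ha : ∀ j, δF (a j) = 0) (hu : ∀ j, u j ≠ 0)
    (hlam : ∀ j, δF (lam j) = δF (u j) / u j)
    (hb : ∀ k, δF (b k) = 0)
    (hEk : ∀ k, δF (Ek k) = δF (-(vk k ^ 2)) * Ek k)
    (hc : ∀ i, δF (c i) = 0) (hcc : ∀ i l, δF (cc i l) = 0)
    (hsym : ∀ i l, cc i l = cc l i)
    (hr : ∀ i, δF (r i)
        = c i * (δF (1 - g i) / (1 - g i)) + ∑ l, cc i l * (δF (g l) / g l))
    (hv : v = (∑ i, r i * (δF (g i) / g i)) + (∑ j, a j * (δF (u j) / lam j))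
        + (∑ k, b k * δF (vk k) * Ek k) + δF w) :
    ∃ (E : Type u) (_ : Field E) (_ : CharZero E) (δE : Derivation ℚ E E)
      (ι : F →+* E),
      (∀ x : F, δE (ι x) = ι (δF x)) ∧
      (∀ y : E, δE y = 0 → ∃ x : F, δF x = 0 ∧ ι x = y) ∧
      (∃ (n : ℕ) (θ : Fin n → E),
        Subfield.closure (Set.range ⇑ι ∪ Set.range θ) = ⊤ ∧
        ∀ i : Fin n,
          (∃ h : F, h ≠ 0 ∧ δE (θ i) = ι (δF h) / ι h) ∨
          (∃ g₀ : F, g₀ ≠ 0 ∧ g₀ ≠ 1 ∧ ∃ η : E,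
            δE η = -(δE (1 - ι g₀) / (1 - ι g₀)) ∧
            δE (θ i) = (ι (δF g₀) / ι g₀) * η) ∨
          (∃ p q : F, δF q = δF p / p ∧ δE (θ i) = ι (δF p) / ι q) ∨
          (∃ p q : F, δF q = δF (-(p ^ 2)) * q ∧ δE (θ i) = ι (δF p) * ι q)) ∧
      (∃ z : E, δE z = ι v) :=
  stmt11_general δF v w r g a u lam b vk Ek c cc hg ha hlam hb hEk hc hcc hsym hr hv
end

section
/- Let F = ℂ(x, T) be the differential field with x' = 1 and T' = T (T transcendental over ℂ(x), representing e^x), with constants ℂ, and let E = F(M, D) where M' = (1-T)'/(1-T) = -T/(1-T), D' = -(T'/T)·M = -M, and M, D are each transcendental over the preceding field with C_E = ℂ. If u ∈ E satisfies u' ∈ F, then there exist r, w ∈ F and a constant c ∈ ℂ with r' = c such that u' = r·(1-T)'/(1-T) + w'. Conversely, for any r, w ∈ F with r' = c ∈ ℂ, the element v := r·(1-T)'/(1-T) + w' ∈ F has the antiderivative c·D + w + r·M ∈ E. -/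
/-
Both `M` and `D` are primitives over the field below them (`M' ∈ F`, `D' = -M ∈ F(M)`) that add
no new constants. For such a primitive `t` over `K`, an element of `K(t)` whose derivative is a
polynomial in `t` is itself a polynomial in `t`: a monic denominator `Q` coprime to the numerator
divides its own derivative, which has smaller degree, so `Q' = 0`, and if `deg Q = n ≥ 1` the
subleading coefficient makes `q_{n-1} + n t` a constant, forcing `t ∈ K`. If moreover the
derivative is linear in `t` with constant leading coefficient, the polynomial is linear, since
otherwise (using `x' = 1`) a constant of the form `k₀ + k₁ t` with `k₁ ≠ 0` appears again.
Applied to `D` this writes `u = p₀ + κ D` with `κ` constant and `p₀' = u' + κ M`; applied to `p₀`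
and `M` it writes `p₀ = w + r M` with `r' = κ` and `u' = r M' + w'`. The converse is a direct
computation with `D' = -M`.
-/

open Polynomial IntermediateField
open scoped Differential

section Primitive

variable {K L : Type*} [Field K] [Field L] [Algebra K L]

theorem exists_monic_isCoprime_of_mem_adjoin {t : L} (ht : Transcendental K t) {u : L}
    (hu : u ∈ K⟮t⟯) : ∃ P Q : K[X], Q.Monic ∧ IsCoprime P Q ∧ u = aeval t P / aeval t Q := by
  obtain ⟨P, Q, rfl⟩ := (mem_adjoin_simple_iff K u).1 hu
  have hφ := nonZeroDivisors_le_comap_nonZeroDivisors_of_injective _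
    (transcendental_iff_injective.1 ht)
  set f := algebraMap K[X] (RatFunc K) P / algebraMap K[X] (RatFunc K) Q
  refine ⟨f.num, f.denom, RatFunc.monic_denom f, RatFunc.isCoprime_num_denom f, ?_⟩
  rw [← RatFunc.liftAlgHom_apply_div _ hφ, ← RatFunc.liftAlgHom_apply_div _ hφ,
    RatFunc.num_div_denom]

namespace Differential

variable [Differential K] [Differential L] [DifferentialAlgebra K L]

lemma coeff_implicitDeriv_C (a : K) (p : K[X]) (n : ℕ) :
    (implicitDeriv (C a) p).coeff n = (p.coeff n)′ + a * (p.coeff (n + 1) * (n + 1)) := by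
  simp [implicitDeriv, coeff_derivative]

lemma degree_implicitDeriv_C_lt (a : K) {Q : K[X]} (hQ : Q.Monic) :
    (implicitDeriv (C a) Q).degree < Q.degree := by
  rw [degree_eq_natDegree hQ.ne_zero, degree_lt_iff_coeff_zero]
  intro m hm
  replace hm : Q.natDegree ≤ m := mod_cast hm
  rw [coeff_implicitDeriv_C, coeff_eq_zero_of_natDegree_lt (Nat.lt_succ_of_le hm)]
  rcases hm.eq_or_lt with rfl | h
  · simp [hQ.coeff_natDegree]
  · simp [coeff_eq_zero_of_natDegree_lt h]

/-- `k₀′ + k₁ * a` is the derivative of `k₀ + k₁ * t`. -/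
lemma deriv_add_mul_ne_zero [ContainConstants K L] {t : L} (ht : Transcendental K t) {a : K}
    (hta : t′ = algebraMap K L a) {k₀ k₁ : K} (hk₁ : k₁′ = 0) (hk₁0 : k₁ ≠ 0) :
    k₀′ + k₁ * a ≠ 0 := by
  intro h
  have hderiv : (algebraMap K L k₀ + algebraMap K L k₁ * t)′ = 0 := by
    simp only [map_add, Derivation.leibniz, smul_eq_mul, deriv_algebraMap, hk₁, hta]
    simp only [map_zero, mul_zero, add_zero, ← map_mul, ← map_add, h]
  obtain ⟨k, hk⟩ := mem_range_of_deriv_eq_zero K hderiv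
  apply ht
  have : t = algebraMap K L ((k - k₀) / k₁) := by
    rw [map_div₀, map_sub, hk, add_sub_cancel_left, mul_div_cancel_left₀ _ (by simpa using hk₁0)]
  rw [this]
  exact isAlgebraic_algebraMap _

variable [CharZero K] [ContainConstants K L] {t : L} (ht : Transcendental K t) {a : K}
  (hta : t′ = algebraMap K L a)
include ht hta

theorem exists_eq_aeval_of_deriv_eq_aeval {u : L} (hu : u ∈ K⟮t⟯) {S : K[X]}
    (hS : u′ = aeval t S) : ∃ P : K[X], u = aeval t P := by
  have hinj := transcendental_iff_injective.1 ht
  have hd : ∀ p, (aeval t p)′ = aeval t (implicitDeriv (C a) p) :=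
    deriv_aeval_eq_implicitDeriv t (C a) (by simpa using hta)
  obtain ⟨P, Q, hQ, hPQ, rfl⟩ := exists_monic_isCoprime_of_mem_adjoin ht hu
  have hQt : aeval t Q ≠ 0 := fun h => hQ.ne_zero (hinj (by simpa using h))
  have hQP : Q * implicitDeriv (C a) P = S * Q ^ 2 + P * implicitDeriv (C a) Q := by
    apply hinj
    have hP : aeval t P = aeval t P / aeval t Q * aeval t Q := (div_mul_cancel₀ _ hQt).symm
    have hP' := congrArg (·′) hP
    simp only [Derivation.leibniz, smul_eq_mul, hS, hd] at hP'
    simp only [map_add, map_mul, map_pow]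
    rw [hP']
    field_simp
    ring
  have hdvd : Q ∣ implicitDeriv (C a) Q :=
    hPQ.symm.dvd_of_dvd_mul_left ⟨implicitDeriv (C a) P - S * Q, by linear_combination -hQP⟩
  have hzero : implicitDeriv (C a) Q = 0 :=
    eq_zero_of_dvd_of_degree_lt hdvd (degree_implicitDeriv_C_lt a hQ)
  obtain hn | hn := Nat.eq_zero_or_pos Q.natDegree
  · exact ⟨P, by rw [hQ.natDegree_eq_zero.1 hn, map_one, div_one]⟩
  · have hcoeff := congrArg (coeff · (Q.natDegree - 1)) hzero
    simp only [coeff_implicitDeriv_C, Nat.sub_add_cancel hn, hQ.coeff_natDegree, one_mul,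
      coeff_zero] at hcoeff
    refine absurd ?_ (deriv_add_mul_ne_zero ht hta (k₀ := Q.coeff (Q.natDegree - 1))
      (k₁ := Q.natDegree) (by simp) (by simp; omega))
    rw [← hcoeff]
    push_cast [Nat.cast_sub hn]
    ring

theorem natDegree_le_one_of_implicitDeriv_eq {x : K} (hx : x′ = 1) {α β : K} (hβ : β′ = 0)
    {q : K[X]} (hq : implicitDeriv (C a) q = C α + C β * X) : q.natDegree ≤ 1 := by
  by_contra! hm
  set m := q.natDegree
  set γ := (C α + C β * X).coeff (m - 1)
  have hcoeff n : (q.coeff n)′ + a * (q.coeff (n + 1) * (n + 1)) = (C α + C β * X).coeff n := by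
    rw [← coeff_implicitDeriv_C, hq]
  have hγ : γ′ = 0 := by
    have : m - 1 ≠ 0 := by omega
    obtain h | h := eq_or_ne (m - 1) 1
    · simp [γ, h, hβ]
    · simp [γ, coeff_C, coeff_X, this, Ne.symm h]
  have hlead : (q.coeff m)′ = 0 := by
    have := hcoeff m
    simp_all [coeff_eq_zero_of_natDegree_lt (Nat.lt_succ_self m), coeff_C, coeff_X,
      show m ≠ 0 by omega, show 1 ≠ m by omega]
  have hnext := hcoeff (m - 1)
  rw [← Nat.cast_add_one, Nat.sub_add_cancel (by omega : 1 ≤ m)] at hnext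
  refine deriv_add_mul_ne_zero ht hta (k₀ := q.coeff (m - 1) - γ * x) (k₁ := q.coeff m * m)
    (by simp [hlead]) ?_ ?_
  · have hq0 : q ≠ 0 := by rintro rfl; simp [m] at hm
    simp [m, hq0]
    omega
  · simp only [map_sub, Derivation.leibniz, smul_eq_mul, hx, hγ]
    linear_combination hnext

theorem exists_eq_add_mul_of_deriv_eq_add_mul {x : K} (hx : x′ = 1) {u : L} (hu : u ∈ K⟮t⟯)
    {α β : K} (hβ : β′ = 0) (hu' : u′ = algebraMap K L α + algebraMap K L β * t) :
    ∃ p₀ p₁ : K, u = algebraMap K L p₀ + algebraMap K L p₁ * t ∧ p₁′ = β ∧ p₀′ + p₁ * a = α := by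
  have hS : u′ = aeval t (C α + C β * X) := by simp [hu']
  obtain ⟨P, rfl⟩ := exists_eq_aeval_of_deriv_eq_aeval ht hta hu hS
  have hP : implicitDeriv (C a) P = C α + C β * X := by
    apply transcendental_iff_injective.1 ht
    rw [← deriv_aeval_eq_implicitDeriv t (C a) (by simpa using hta), hS]
  have hdeg := natDegree_le_one_of_implicitDeriv_eq ht hta hx hβ hP
  have hP2 : P.coeff 2 = 0 := coeff_eq_zero_of_natDegree_lt (hdeg.trans_lt one_lt_two)
  refine ⟨P.coeff 0, P.coeff 1, ?_, ?_, ?_⟩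
  · conv_lhs => rw [eq_X_add_C_of_natDegree_le_one hdeg]
    simp [add_comm]
  · simpa [coeff_implicitDeriv_C, hP2] using congrArg (coeff · 1) hP
  · simpa [coeff_implicitDeriv_C, mul_comm a] using congrArg (coeff · 0) hP

end Differential

end Primitive

theorem Subfield.closure_closure_union {E : Type*} [Field E] (s t : Set E) :
    Subfield.closure ((Subfield.closure s : Set E) ∪ t) = Subfield.closure (s ∪ t) := by
  rw [Subfield.closure_union, Subfield.closure_eq, ← Subfield.closure_union]

section Subfield

variable {E : Type*} [Field E] [CharZero E] (δ : Derivation ℚ E E)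

theorem Derivation.map_mem_subfieldClosure_s17 {s : Set E} (hs : ∀ a ∈ s, δ a ∈ Subfield.closure s)
    {a : E} (ha : a ∈ Subfield.closure s) : δ a ∈ Subfield.closure s := by
  induction ha using Subfield.closure_induction with
  | mem a ha => exact hs a ha
  | one => simp
  | add a b _ _ iha ihb => simpa using add_mem iha ihb
  | neg a _ iha => simpa using neg_mem iha
  | inv a ha iha =>
    rw [Derivation.leibniz_inv, smul_eq_mul]
    exact mul_mem (neg_mem (pow_mem (inv_mem ha) 2)) iha
  | mul a b ha hb iha ihb =>
    rw [Derivation.leibniz, smul_eq_mul, smul_eq_mul]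
    exact add_mem (mul_mem ha ihb) (mul_mem hb iha)

def Derivation.restrictSubfield_s17 (K : Subfield E) (hK : ∀ a ∈ K, δ a ∈ K) : Derivation ℤ K K :=
  Derivation.mk'
    ((δ.toAddMonoidHom.comp K.subtype.toAddMonoidHom).codRestrict K
      fun a => hK a a.2).toIntLinearMap
    fun a b => Subtype.ext (by simp [Derivation.leibniz, add_comm])

open Differential in
theorem Derivation.exists_eq_add_mul_of_apply_eq_add_mul {K : Subfield E}
    (hK : ∀ a ∈ K, δ a ∈ K) (hconst : ∀ y, δ y = 0 → y ∈ K) {x : E} (hxK : x ∈ K)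
    (hx : δ x = 1) {t : E} (ht : Transcendental K t) (htK : δ t ∈ K) {u : E}
    (hu : u ∈ Subfield.closure (K ∪ {t})) {α β : E} (hα : α ∈ K) (hβ : δ β = 0)
    (hu' : δ u = α + β * t) :
    ∃ p₀ ∈ K, ∃ p₁ ∈ K, u = p₀ + p₁ * t ∧ δ p₁ = β ∧ δ p₀ + p₁ * δ t = α := by
  let : Differential E := ⟨δ.restrictScalars ℤ⟩
  let : Differential K := ⟨δ.restrictSubfield_s17 K hK⟩
  have : DifferentialAlgebra K E := ⟨fun _ => rfl⟩
  have : ContainConstants K E := ⟨fun {y} hy => ⟨⟨y, hconst y hy⟩, rfl⟩⟩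
  have hu : u ∈ K⟮t⟯ := by
    rwa [← IntermediateField.mem_toSubfield, IntermediateField.adjoin_toSubfield,
      show Set.range (algebraMap K E) = K from Subtype.range_coe]
  obtain ⟨p₀, p₁, h, h₁, h₀⟩ := exists_eq_add_mul_of_deriv_eq_add_mul ht (a := ⟨δ t, htK⟩) rfl
    (x := ⟨x, hxK⟩) (Subtype.ext hx) hu (α := ⟨α, hα⟩) (β := ⟨β, hconst β hβ⟩) (Subtype.ext hβ) hu'
  exact ⟨p₀, p₀.2, p₁, p₁.2, h, congrArg Subtype.val h₁, congrArg Subtype.val h₀⟩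

theorem Derivation.exists_apply_eq_mul_apply_add_apply {F : Subfield E} (hF : ∀ a ∈ F, δ a ∈ F)
    (hconst : ∀ y, δ y = 0 → y ∈ F) {x : E} (hxF : x ∈ F) (hx : δ x = 1) {M D : E}
    (hMtr : Transcendental F M) (hδM : δ M ∈ F)
    (hDtr : Transcendental (Subfield.closure ((F : Set E) ∪ {M})) D) (hδD : δ D = -M) {u : E}
    (hu : u ∈ Subfield.closure ((Subfield.closure ((F : Set E) ∪ {M}) : Set E) ∪ {D}))
    (hδu : δ u ∈ F) :
    ∃ r ∈ F, ∃ w ∈ F, δ (δ r) = 0 ∧ δ u = r * δ M + δ w := by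
  set K := Subfield.closure ((F : Set E) ∪ {M})
  have hFK : F ≤ K := fun a ha => Subfield.subset_closure (Or.inl ha)
  have hK : ∀ a ∈ K, δ a ∈ K := fun a => δ.map_mem_subfieldClosure_s17 <| by
    rintro s (hs | rfl)
    · exact hFK (hF s hs)
    · exact hFK hδM
  have hδDK : δ D ∈ K := hδD ▸ neg_mem (Subfield.subset_closure (Or.inr rfl))
  obtain ⟨p₀, hp₀, κ, -, -, hκ, hp₀'⟩ := δ.exists_eq_add_mul_of_apply_eq_add_mul hK
    (fun y hy => hFK (hconst y hy)) (hFK hxF) hx hDtr hδDK hu (hFK hδu) (map_zero δ) (by ring)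
  obtain ⟨w, hw, r, hr, -, hr', hw'⟩ := δ.exists_eq_add_mul_of_apply_eq_add_mul hF hconst hxF hx
    hMtr hδM hp₀ hδu hκ (by linear_combination hp₀' - κ * hδD)
  exact ⟨r, hr, w, hw, hr' ▸ hκ, by linear_combination -hw'⟩

end Subfield

theorem stmt17_general {E : Type*} [Field E] [CharZero E] (δ : Derivation ℚ E E)
    (c : ℂ →+* E) (x T M D : E)
    (hc : ∀ a : ℂ, δ (c a) = 0) (hx : δ x = 1) (hT : δ T = T)
    (hM : δ M = δ (1 - T) / (1 - T)) (hD : δ D = -(δ T / T) * M)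
    (hTtr : Transcendental (↥(Subfield.closure (Set.range ⇑c ∪ {x}))) T)
    (hMtr : Transcendental (↥(Subfield.closure (Set.range ⇑c ∪ {x, T}))) M)
    (hDtr : Transcendental (↥(Subfield.closure (Set.range ⇑c ∪ {x, T, M}))) D)
    (hgen : Subfield.closure (Set.range ⇑c ∪ {x, T, M, D}) = ⊤)
    (hconst : ∀ y : E, δ y = 0 → ∃ z : ℂ, y = c z) :
    (∀ u : E, δ u ∈ Subfield.closure (Set.range ⇑c ∪ {x, T}) →
      ∃ r w : E, r ∈ Subfield.closure (Set.range ⇑c ∪ {x, T}) ∧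
        w ∈ Subfield.closure (Set.range ⇑c ∪ {x, T}) ∧
        (∃ z : ℂ, δ r = c z) ∧
        δ u = r * (δ (1 - T) / (1 - T)) + δ w) ∧
    (∀ (r w : E), r ∈ Subfield.closure (Set.range ⇑c ∪ {x, T}) →
      w ∈ Subfield.closure (Set.range ⇑c ∪ {x, T}) → ∀ z : ℂ, δ r = c z →
      δ (c z * D + w + r * M) = r * (δ (1 - T) / (1 - T)) + δ w) := by
  set F := Subfield.closure (Set.range c ∪ {x, T})
  have hFM : Subfield.closure ((F : Set E) ∪ {M}) = Subfield.closure (Set.range c ∪ {x, T, M}) := by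
    simp only [F, Subfield.closure_closure_union, Set.union_assoc, Set.insert_union,
      Set.singleton_union]
  have hKD : Subfield.closure ((Subfield.closure ((F : Set E) ∪ {M}) : Set E) ∪ {D}) = ⊤ := by
    simp only [hFM, Subfield.closure_closure_union, Set.union_assoc, Set.insert_union,
      Set.singleton_union, hgen]
  have hTF : T ∈ F := Subfield.subset_closure (by simp)
  have hT0 : T ≠ 0 := fun h => hTtr (h ▸ isAlgebraic_zero)
  have hδD : δ D = -M := by rw [hD, hT, div_self hT0]; ring
  have hδM : δ M = -T / (1 - T) := by rw [hM, map_sub, Derivation.map_one_eq_zero, hT, zero_sub]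
  have hδF : ∀ a ∈ F, δ a ∈ F := fun a => δ.map_mem_subfieldClosure_s17 <| by
    rintro s (⟨z, rfl⟩ | rfl | rfl)
    · simp [hc]
    · simp [hx]
    · rwa [hT]
  have hconstF : ∀ y, δ y = 0 → y ∈ F := fun y hy => by
    obtain ⟨z, rfl⟩ := hconst y hy
    exact Subfield.subset_closure (Or.inl ⟨z, rfl⟩)
  refine ⟨fun u hu => ?_, fun r w _ _ z hr => ?_⟩
  · obtain ⟨r, hr, w, hw, hr', h⟩ := δ.exists_apply_eq_mul_apply_add_apply hδF hconstF
      (Subfield.subset_closure (by simp)) hx hMtr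
      (hδM ▸ div_mem (neg_mem hTF) (sub_mem (one_mem F) hTF)) (hFM ▸ hDtr) hδD
      (hKD ▸ Subfield.mem_top u) hu
    obtain ⟨z, hz⟩ := hconst _ hr'
    exact ⟨r, w, hr, hw, ⟨z, hz⟩, hM ▸ h⟩
  · simp only [map_add, Derivation.leibniz, smul_eq_mul, hc, hr, hδD, ← hM]
    ring

/-- Example 3.2: let `F = ℂ(x, T)` with `x' = 1`, `T' = T` (`T = e^x`) and let
`E = F(M, D)` where `M = log(1 - e^x)` and `D = ℓ₂(e^x)`, a transcendental
tower with constants `ℂ`.  Then `u ∈ E` has `u' ∈ F` iff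
`u' = r·(1-T)'/(1-T) + w'` with `r, w ∈ F`, `r' = c ∈ ℂ`; and conversely any
such element has antiderivative `c·D + w + r·M ∈ E`. -/
theorem stmt17 {E : Type*} [Field E] [CharZero E] (δ : Derivation ℚ E E)
    (c : ℂ →+* E) (x T M D : E)
    (hc : ∀ a : ℂ, δ (c a) = 0) (hx : δ x = 1) (hT : δ T = T)
    (hM : δ M = δ (1 - T) / (1 - T)) (hD : δ D = -(δ T / T) * M)
    (hxtr : Transcendental (↥(Subfield.closure (Set.range ⇑c))) x)
    (hTtr : Transcendental (↥(Subfield.closure (Set.range ⇑c ∪ {x}))) T)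
    (hMtr : Transcendental (↥(Subfield.closure (Set.range ⇑c ∪ {x, T}))) M)
    (hDtr : Transcendental (↥(Subfield.closure (Set.range ⇑c ∪ {x, T, M}))) D)
    (hgen : Subfield.closure (Set.range ⇑c ∪ {x, T, M, D}) = ⊤)
    (hconst : ∀ y : E, δ y = 0 → ∃ z : ℂ, y = c z) :
    (∀ u : E, δ u ∈ Subfield.closure (Set.range ⇑c ∪ {x, T}) →
      ∃ r w : E, r ∈ Subfield.closure (Set.range ⇑c ∪ {x, T}) ∧
        w ∈ Subfield.closure (Set.range ⇑c ∪ {x, T}) ∧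
        (∃ z : ℂ, δ r = c z) ∧
        δ u = r * (δ (1 - T) / (1 - T)) + δ w) ∧
    (∀ (r w : E), r ∈ Subfield.closure (Set.range ⇑c ∪ {x, T}) →
      w ∈ Subfield.closure (Set.range ⇑c ∪ {x, T}) → ∀ z : ℂ, δ r = c z →
      δ (c z * D + w + r * M) = r * (δ (1 - T) / (1 - T)) + δ w) :=
  stmt17_general δ c x T M D hc hx hT hM hD hTtr hMtr hDtr hgen hconst
end
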